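/- arXiv:1510.05202 — 5 statements merged into one kernel-verified Lean document; each statement's English description precedes it below -/
import Mathlib

section
/- Let A and B be positive semidefinite operators on a finite-dimensional complex Hilbert space with range(A) ⊆ range(B). Then range(A·B·A) = range(A). -/
open ComplexOrder Matrix

theorem stmt_0 {n : ℕ} (A B : Matrix (Fin n) (Fin n) ℂ)
    (hA : A.PosSemidef) (hB : B.PosSemidef)
    (h : LinearMap.range (Matrix.toLin' A) ≤ LinearMap.range (Matrix.toLin' B)) :
    LinearMap.range (Matrix.toLin' (A * B * A)) = LinearMap.range (Matrix.toLin' A) := by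
  have hle : LinearMap.range (Matrix.toLin' (A * B * A)) ≤ LinearMap.range (Matrix.toLin' A) := by
    rintro y ⟨x, rfl⟩
    refine ⟨Matrix.toLin' (B * A) x, ?_⟩
    simp only [Matrix.toLin'_apply, Matrix.mulVec_mulVec, ← Matrix.mul_assoc]
  have hker : LinearMap.ker (Matrix.toLin' (A * B * A)) ≤ LinearMap.ker (Matrix.toLin' A) := by
    intro x hx
    simp only [LinearMap.mem_ker, Matrix.toLin'_apply] at hx ⊢
    have h1 : star (A *ᵥ x) ⬝ᵥ B *ᵥ (A *ᵥ x) = 0 := by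
      rw [Matrix.star_mulVec, ← Matrix.dotProduct_mulVec, hA.1, Matrix.mulVec_mulVec,
        Matrix.mulVec_mulVec, hx, dotProduct_zero]
    have h2 : B *ᵥ (A *ᵥ x) = 0 := (hB.dotProduct_mulVec_zero_iff _).mp h1
    obtain ⟨w, hw⟩ := h (LinearMap.mem_range_self (Matrix.toLin' A) x)
    rw [Matrix.toLin'_apply, Matrix.toLin'_apply] at hw
    have h3 : star (B *ᵥ w) ⬝ᵥ (B *ᵥ w) = 0 := by
      rw [Matrix.star_mulVec, ← Matrix.dotProduct_mulVec, hB.1, hw, h2, dotProduct_zero]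
    rw [← hw]
    exact (dotProduct_star_self_eq_zero).mp h3
  have hA1 := (Matrix.toLin' (A * B * A)).finrank_range_add_finrank_ker
  have hA2 := (Matrix.toLin' A).finrank_range_add_finrank_ker
  have hk := Submodule.finrank_mono hker
  have hr : Module.finrank ℂ ↥(LinearMap.range (Matrix.toLin' A)) ≤
      Module.finrank ℂ ↥(LinearMap.range (Matrix.toLin' (A * B * A))) := by omega
  exact Submodule.eq_of_le_of_finrank_le hle hr
end

section
/- For a positive semidefinite operator C on a finite-dimensional complex Hilbert space, the range of C equals the set of vectors x such that there exists α > 0 with C − α·(outer product of x with itself) positive semidefinite. -/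
/-!
If `x = C u`, Cauchy–Schwarz for the semi-inner product `(a, b) ↦ ⟪a, C b⟫` gives
`|⟪x, y⟫|² ≤ ⟪u, C u⟫ ⟪y, C y⟫`, so `C - α |x⟩⟨x|` is positive for `α = (⟪u, C u⟫ + 1)⁻¹`.
Conversely, testing `C - α |x⟩⟨x| ≥ 0` on a vector `q` of the kernel gives `α |⟪x, q⟫|² ≤ 0`,
so `x ⊥ ker C = (range C)ᗮ`, i.e. `x ∈ range C`.
-/

open ComplexOrder
open InnerProductSpace RCLike

namespace LinearMap

variable {𝕜 E : Type*} [RCLike 𝕜] [NormedAddCommGroup E] [InnerProductSpace 𝕜 E]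
  {T : E →ₗ[𝕜] E}

local notation "⟪" x ", " y "⟫" => inner 𝕜 x y

abbrev IsPositive.preInnerProductCore (hT : T.IsPositive) : PreInnerProductSpace.Core 𝕜 E where
  inner x y := ⟪x, T y⟫
  conj_inner_symm x y := by rw [inner_conj_symm, hT.isSymmetric]
  re_inner_nonneg x := hT.re_inner_nonneg_right x
  add_left _ _ _ := inner_add_left _ _ _
  smul_left _ _ _ := inner_smul_left _ _ _

theorem IsPositive.norm_inner_sq_le (hT : T.IsPositive) (x y : E) :
    ‖⟪x, T y⟫‖ ^ 2 ≤ re ⟪x, T x⟫ * re ⟪y, T y⟫ := by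
  have h := @InnerProductSpace.Core.inner_mul_inner_self_le 𝕜 E _ _ _ hT.preInnerProductCore x y
  change ‖⟪x, T y⟫‖ * ‖⟪y, T x⟫‖ ≤ re ⟪x, T x⟫ * re ⟪y, T y⟫ at h
  rwa [← hT.isSymmetric y x, norm_inner_symm (T y), ← sq] at h

theorem IsSymmetric.isPositive_sub_smul_rankOne_iff (hT : T.IsSymmetric) (α : ℝ) (x : E) :
    (T - (α : 𝕜) • (rankOne 𝕜 x x : E →ₗ[𝕜] E)).IsPositive ↔
      ∀ y, α * ‖⟪x, y⟫‖ ^ 2 ≤ re ⟪y, T y⟫ := by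
  have hR : (rankOne 𝕜 x x : E →ₗ[𝕜] E).IsSymmetric := (isPositive_rankOne_self x).isSymmetric
  have quad (y : E) : re ⟪(T - (α : 𝕜) • (rankOne 𝕜 x x : E →ₗ[𝕜] E)) y, y⟫ =
      re ⟪y, T y⟫ - α * ‖⟪x, y⟫‖ ^ 2 := by
    rw [sub_apply, smul_apply, ContinuousLinearMap.coe_coe, rankOne_apply, inner_sub_left,
      inner_smul_left, inner_smul_left, RCLike.conj_mul, conj_ofReal, hT y y, map_sub,
      ← ofReal_pow, ← ofReal_mul, ofReal_re]
  simp_rw [IsPositive, quad, sub_nonneg]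
  exact and_iff_right (hT.sub (hR.smul (conj_ofReal α)))

theorem IsPositive.mem_range_iff [FiniteDimensional 𝕜 E] (hT : T.IsPositive) (x : E) :
    x ∈ range T ↔ ∃ α : ℝ, 0 < α ∧ (T - (α : 𝕜) • (rankOne 𝕜 x x : E →ₗ[𝕜] E)).IsPositive := by
  simp_rw [hT.isSymmetric.isPositive_sub_smul_rankOne_iff]
  constructor
  · rintro ⟨u, rfl⟩
    have hu := hT.re_inner_nonneg_right u
    refine ⟨(re ⟪u, T u⟫ + 1)⁻¹, by positivity, fun y => ?_⟩
    have hy := hT.re_inner_nonneg_right y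
    rw [hT.isSymmetric u y, inv_mul_le_iff₀ (by positivity)]
    nlinarith [hT.norm_inner_sq_le u y]
  · rintro ⟨α, hα, h⟩
    rw [← Submodule.orthogonal_orthogonal (range T), hT.isSymmetric.orthogonal_range,
      Submodule.mem_orthogonal']
    intro q hq
    have h0 : ‖⟪x, q⟫‖ ^ 2 ≤ 0 :=
      le_of_mul_le_mul_left (by simpa [mem_ker.mp hq] using h q) hα
    simpa using h0

end LinearMap

namespace Matrix

variable {𝕜 m n : Type*} [RCLike 𝕜] [Fintype n] [DecidableEq n]

theorem toLp_mem_range_toEuclideanLin_iff (A : Matrix m n 𝕜) (x : m → 𝕜) :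
    WithLp.toLp 2 x ∈ LinearMap.range A.toEuclideanLin ↔ x ∈ LinearMap.range A.toLin' :=
  ⟨fun ⟨v, hv⟩ => ⟨v.ofLp, congrArg WithLp.ofLp hv⟩,
    fun ⟨u, hu⟩ => ⟨WithLp.toLp 2 u, by rw [← hu]; rfl⟩⟩

theorem toEuclideanLin_vecMulVec [Fintype m] (x : m → 𝕜) (y : n → 𝕜) :
    (vecMulVec x (star y)).toEuclideanLin = rankOne 𝕜 (WithLp.toLp 2 x) (WithLp.toLp 2 y) := by
  rw [← symm_toEuclideanLin_rankOne, LinearEquiv.apply_symm_apply]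

end Matrix

theorem stmt_1 {n : ℕ} (C : Matrix (Fin n) (Fin n) ℂ) (hC : C.PosSemidef) :
    (LinearMap.range (Matrix.toLin' C) : Set (Fin n → ℂ)) =
      {x : Fin n → ℂ | ∃ α : ℝ, 0 < α ∧
        (C - (α : ℂ) • Matrix.vecMulVec x (star x)).PosSemidef} := by
  ext x
  rw [SetLike.mem_coe, ← Matrix.toLp_mem_range_toEuclideanLin_iff,
    (Matrix.isPositive_toEuclideanLin_iff.mpr hC).mem_range_iff]
  simp only [Set.mem_ofPred_eq, ← Matrix.isPositive_toEuclideanLin_iff, map_sub, map_smul,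
    Matrix.toEuclideanLin_vecMulVec, RCLike.ofReal_eq_complex_ofReal]
end

section
/- Let A, B, C be positive semidefinite operators on a finite-dimensional complex Hilbert space with range(A) ⊆ range(B) and range(A) ⊆ range(C). Then range(A·C·B·C·A) = range(A). -/
open ComplexOrder Matrix

lemma kerK {n : ℕ} {A B : Matrix (Fin n) (Fin n) ℂ} (hA : A.PosSemidef) (hB : B.IsHermitian)
    (hAB : LinearMap.range (Matrix.toLin' A) ≤ LinearMap.range (Matrix.toLin' B))
    {x : Fin n → ℂ} (hx : B *ᵥ x = 0) : A *ᵥ x = 0 := by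
  rw [← hA.dotProduct_mulVec_zero_iff]
  obtain ⟨y, hy⟩ := hAB ⟨x, rfl⟩
  rw [Matrix.toLin'_apply, Matrix.toLin'_apply] at hy
  rw [← hy, Matrix.dotProduct_mulVec]
  have : Matrix.vecMul (star x) B = star (B *ᵥ x) := by
    rw [Matrix.star_mulVec, hB.eq]
  rw [this, hx, star_zero, zero_dotProduct]

theorem stmt_3 {n : ℕ} (A B C : Matrix (Fin n) (Fin n) ℂ)
    (hA : A.PosSemidef) (hB : B.PosSemidef) (hC : C.PosSemidef)
    (hAB : LinearMap.range (Matrix.toLin' A) ≤ LinearMap.range (Matrix.toLin' B))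
    (hAC : LinearMap.range (Matrix.toLin' A) ≤ LinearMap.range (Matrix.toLin' C)) :
    LinearMap.range (Matrix.toLin' (A * C * B * C * A)) = LinearMap.range (Matrix.toLin' A) := by
  set M := A * C * B * C * A with hM
  -- kernel equality
  have hker : LinearMap.ker (Matrix.toLin' M) = LinearMap.ker (Matrix.toLin' A) := by
    ext x
    simp only [LinearMap.mem_ker, Matrix.toLin'_apply]
    constructor
    · intro hx
      have h0 : star x ⬝ᵥ M *ᵥ x = 0 := by rw [hx, dotProduct_zero]
      -- star x ⬝ᵥ M x = star (C *ᵥ A *ᵥ x) ⬝ᵥ B *ᵥ (C *ᵥ A *ᵥ x)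
      have key : star (C *ᵥ A *ᵥ x) ⬝ᵥ B *ᵥ (C *ᵥ A *ᵥ x) = 0 := by
        rw [← h0, hM]
        rw [Matrix.star_mulVec, Matrix.star_mulVec, hC.1.eq, hA.1.eq]
        simp only [Matrix.mulVec_mulVec, Matrix.dotProduct_mulVec, Matrix.vecMul_vecMul]
        congr 2
        simp only [mul_assoc]
      have hB0 : B *ᵥ (C *ᵥ A *ᵥ x) = 0 := (hB.dotProduct_mulVec_zero_iff _).mp key
      have hA1 : A *ᵥ (C *ᵥ A *ᵥ x) = 0 := kerK hA hB.1 hAB hB0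
      have key2 : star (A *ᵥ x) ⬝ᵥ C *ᵥ (A *ᵥ x) = 0 := by
        have : star x ⬝ᵥ (A *ᵥ (C *ᵥ A *ᵥ x)) = 0 := by rw [hA1, dotProduct_zero]
        rw [← this, Matrix.dotProduct_mulVec (star x), ← hA.1.eq]
        rw [← Matrix.star_mulVec, hA.1.eq]
      have hC0 : C *ᵥ (A *ᵥ x) = 0 := (hC.dotProduct_mulVec_zero_iff _).mp key2
      have hA2 : A *ᵥ (A *ᵥ x) = 0 := kerK hA hC.1 hAC hC0
      have : star (A *ᵥ x) ⬝ᵥ (A *ᵥ x) = 0 := by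
        have h3 : star x ⬝ᵥ (A *ᵥ (A *ᵥ x)) = 0 := by rw [hA2, dotProduct_zero]
        rw [← h3, Matrix.dotProduct_mulVec (star x), ← hA.1.eq, ← Matrix.star_mulVec, hA.1.eq]
      exact dotProduct_star_self_eq_zero.mp this
    · intro hx
      have hM' : M = (A * C * B * C) * A := hM
      rw [hM', ← Matrix.mulVec_mulVec, hx, Matrix.mulVec_zero]
  -- range inclusion
  have hle : LinearMap.range (Matrix.toLin' M) ≤ LinearMap.range (Matrix.toLin' A) := by
    rintro _ ⟨x, rfl⟩
    refine ⟨(C * B * C * A) *ᵥ x, ?_⟩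
    rw [Matrix.toLin'_apply, Matrix.toLin'_apply, Matrix.mulVec_mulVec, hM]
    simp only [mul_assoc]
  refine Submodule.eq_of_le_of_finrank_eq hle ?_
  have h1 := LinearMap.finrank_range_add_finrank_ker (Matrix.toLin' M)
  have h2 := LinearMap.finrank_range_add_finrank_ker (Matrix.toLin' A)
  rw [hker] at h1
  omega
end

section
/- Upper bound certificate: fix λ entrywise nonnegative and a POVM Π. Let Y₀ = (Σ_m z_m(λ) Π_m z_m(λ))^{1/2} and for each m let t_m be the largest real number with Y₀ ≥ t_m z_m(λ); set Y = Y₀ + Σ_m (1 − t_m)⁺ z_m(λ), where (x)⁺ = max(x, 0). Then Y ≥ z_m(λ) for all m, and hence Tr Y − λ·b ≥ f°(b) for any b with nonempty feasible set. -/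
open ComplexOrder

/-- An `M`-outcome POVM on `ℂ^n`. -/
def IsPOVM {n M : ℕ} (P : Fin M → Matrix (Fin n) (Fin n) ℂ) : Prop :=
  (∀ m, (P m).PosSemidef) ∧ ∑ m, P m = 1

/-- `z_m(λ) = c_m + ∑_j λ_j a_{j,m}`. -/
noncomputable def zOp {n M J : ℕ} (c : Fin M → Matrix (Fin n) (Fin n) ℂ)
    (a : Fin J → Fin M → Matrix (Fin n) (Fin n) ℂ) (l : Fin J → ℝ) (m : Fin M) :
    Matrix (Fin n) (Fin n) ℂ :=
  c m + ∑ j, (l j : ℂ) • a j m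

/-- `g(Π; λ) = ∑_m Tr(z_m(λ) Π_m)` (real part of the trace). -/
noncomputable def gObj {n M J : ℕ} (c : Fin M → Matrix (Fin n) (Fin n) ℂ)
    (a : Fin J → Fin M → Matrix (Fin n) (Fin n) ℂ) (l : Fin J → ℝ)
    (P : Fin M → Matrix (Fin n) (Fin n) ℂ) : ℝ :=
  ∑ m, (Matrix.trace (zOp c a l m * P m)).re
/-- `β_j(Π) = ∑_m Tr(a_{j,m} Π_m)`. -/
noncomputable def betaFn {n M J : ℕ} (a : Fin J → Fin M → Matrix (Fin n) (Fin n) ℂ)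
    (j : Fin J) (P : Fin M → Matrix (Fin n) (Fin n) ℂ) : ℝ :=
  ∑ m, (Matrix.trace (a j m * P m)).re

/-- `f(Π) = ∑_m Tr(c_m Π_m)`. -/
noncomputable def fObj {n M : ℕ} (c : Fin M → Matrix (Fin n) (Fin n) ℂ)
    (P : Fin M → Matrix (Fin n) (Fin n) ℂ) : ℝ :=
  ∑ m, (Matrix.trace (c m * P m)).re

/-- The positive semidefinite square root (definition removed from Mathlib; restored verbatim). -/
noncomputable def Matrix.PosSemidef.sqrt {n : Type*} [Fintype n] [DecidableEq n] {𝕜 : Type*} [RCLike 𝕜]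
    {A : Matrix n n 𝕜} (hA : A.PosSemidef) : Matrix n n 𝕜 :=
  hA.1.eigenvectorUnitary.1 * Matrix.diagonal ((↑) ∘ (√·) ∘ hA.1.eigenvalues) *
  (star hA.1.eigenvectorUnitary : Matrix n n 𝕜)

/-!
By the choice of `t_m`, `Y - z_m = (Y₀ - t_m z_m) + (t_m + (1 - t_m)⁺ - 1) z_m
+ ∑_{k ≠ m} (1 - t_k)⁺ z_k` is a sum of positive semidefinite terms, since all `z_k ≥ 0`.
Weak duality then follows by pairing `Y - z_m ≥ 0` with the effects `Q_m` of a feasible POVM: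
`Tr Y = ∑_m Tr(Y Q_m) ≥ ∑_m Tr(z_m Q_m) = f(Q) + ∑_j λ_j β_j(Q) ≥ f(Q) + λ·b`.
-/

namespace Matrix

variable {d ι 𝕜 : Type*} [Fintype ι] [RCLike 𝕜]

open scoped MatrixOrder in
lemma PosSemidef.trace_mul_nonneg [Fintype d] {A B : Matrix d d 𝕜} (hA : A.PosSemidef)
    (hB : B.PosSemidef) : 0 ≤ (A * B).trace := by
  classical
  obtain ⟨S, rfl⟩ := CStarAlgebra.nonneg_iff_eq_star_mul_self.mp hB.nonneg
  rw [star_eq_conjTranspose, ← Matrix.mul_assoc, trace_mul_cycle]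
  exact (hA.mul_mul_conjTranspose_same S).trace_nonneg

lemma sum_trace_mul_le_trace [Fintype d] [DecidableEq d] {Y : Matrix d d 𝕜} {Z Q : ι → Matrix d d 𝕜}
    (hYZ : ∀ i, (Y - Z i).PosSemidef) (hQ : ∀ i, (Q i).PosSemidef) (hQ₁ : ∑ i, Q i = 1) :
    ∑ i, (Z i * Q i).trace ≤ Y.trace := by
  calc ∑ i, (Z i * Q i).trace
      ≤ ∑ i, (Y * Q i).trace := Finset.sum_le_sum fun i _ => by
        simpa [Matrix.sub_mul] using ((hYZ i).trace_mul_nonneg (hQ i))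
    _ = Y.trace := by rw [← trace_sum, ← Finset.mul_sum, hQ₁, Matrix.mul_one]

lemma posSemidef_add_sum_max_smul_sub [DecidableEq ι] {Y₀ : Matrix d d 𝕜}
    {Z : ι → Matrix d d 𝕜} {t : ι → ℝ} (hZ : ∀ i, (Z i).PosSemidef)
    (ht : ∀ i, (Y₀ - t i • Z i).PosSemidef) (i : ι) :
    (Y₀ + ∑ k, max (1 - t k) 0 • Z k - Z i).PosSemidef := by
  have hsplit : Y₀ + ∑ k, max (1 - t k) 0 • Z k - Z i =
      (Y₀ - t i • Z i) + (max (1 - t i) 0 + t i - 1) • Z i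
        + ∑ k ∈ Finset.univ.erase i, max (1 - t k) 0 • Z k := by
    rw [← Finset.sum_erase_add _ _ (Finset.mem_univ i)]
    module
  rw [hsplit]
  refine ((ht i).add ((hZ i).smul ?_)).add
    (posSemidef_sum _ fun k _ => (hZ k).smul (le_max_right _ _))
  linarith [le_max_left (1 - t i) 0]

end Matrix

section
variable {n M J : ℕ} {c : Fin M → Matrix (Fin n) (Fin n) ℂ}
  {a : Fin J → Fin M → Matrix (Fin n) (Fin n) ℂ} {l : Fin J → ℝ}

lemma zOp_posSemidef (hc : ∀ m, (c m).PosSemidef) (ha : ∀ j m, (a j m).PosSemidef)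
    (hl : ∀ j, 0 ≤ l j) (m : Fin M) : (zOp c a l m).PosSemidef :=
  (hc m).add (Matrix.posSemidef_sum _ fun j _ => (ha j m).smul (by exact_mod_cast hl j))

lemma gObj_eq_fObj_add_sum_mul_betaFn (P : Fin M → Matrix (Fin n) (Fin n) ℂ) :
    gObj c a l P = fObj c P + ∑ j, l j * betaFn a j P := by
  simp only [gObj, fObj, betaFn, zOp, Matrix.add_mul, Matrix.sum_mul, Matrix.trace_add,
    Matrix.trace_sum, smul_mul_assoc, Matrix.trace_smul, Complex.add_re, Complex.re_sum,
    Finset.mul_sum, Finset.sum_add_distrib, smul_eq_mul, Complex.re_ofReal_mul]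
  rw [Finset.sum_comm]

lemma fObj_le_trace_sub_of_posSemidef_sub_zOp (hl : ∀ j, 0 ≤ l j)
    {Y : Matrix (Fin n) (Fin n) ℂ} (hY : ∀ m, (Y - zOp c a l m).PosSemidef)
    {b : Fin J → ℝ} {Q : Fin M → Matrix (Fin n) (Fin n) ℂ} (hQ : IsPOVM Q)
    (hb : ∀ j, b j ≤ betaFn a j Q) :
    fObj c Q ≤ Y.trace.re - ∑ j, l j * b j := by
  have hg : gObj c a l Q ≤ Y.trace.re := by
    rw [gObj, ← Complex.re_sum]
    exact (Complex.le_def.mp (Matrix.sum_trace_mul_le_trace hY hQ.1 hQ.2)).1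
  have hlb : ∑ j, l j * b j ≤ ∑ j, l j * betaFn a j Q :=
    Finset.sum_le_sum fun j _ => mul_le_mul_of_nonneg_left (hb j) (hl j)
  rw [gObj_eq_fObj_add_sum_mul_betaFn] at hg
  linarith

end

theorem stmt_15_general {n M J : ℕ} (c : Fin M → Matrix (Fin n) (Fin n) ℂ)
    (a : Fin J → Fin M → Matrix (Fin n) (Fin n) ℂ)
    (hc : ∀ m, (c m).PosSemidef) (ha : ∀ j m, (a j m).PosSemidef)
    (l : Fin J → ℝ) (hl : ∀ j, 0 ≤ l j)
    (Y₀ : Matrix (Fin n) (Fin n) ℂ)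
    (t : Fin M → ℝ)
    -- t_m is the largest real with Y₀ ≥ t_m z_m(λ)
    (ht : ∀ m, IsGreatest {s : ℝ | (Y₀ - (s : ℂ) • zOp c a l m).PosSemidef} (t m))
    (Y : Matrix (Fin n) (Fin n) ℂ)
    (hY : Y = Y₀ + ∑ m, ((max (1 - t m) 0 : ℝ) : ℂ) • zOp c a l m) :
    (∀ m, (Y - zOp c a l m).PosSemidef) ∧
    ∀ b : Fin J → ℝ, ∀ Q, IsPOVM Q → (∀ j, b j ≤ betaFn a j Q) →
      fObj c Q ≤ (Matrix.trace Y).re - ∑ j, l j * b j := by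
  have hdom : ∀ m, (Y - zOp c a l m).PosSemidef := by
    simp_rw [hY, Complex.coe_smul]
    exact Matrix.posSemidef_add_sum_max_smul_sub (zOp_posSemidef hc ha hl)
      fun m => by simpa only [Set.mem_ofPred_eq, Complex.coe_smul] using (ht m).1
  exact ⟨hdom, fun _ _ hQ hb => fObj_le_trace_sub_of_posSemidef_sub_zOp hl hdom hQ hb⟩

theorem stmt_15 {n M J : ℕ} (c : Fin M → Matrix (Fin n) (Fin n) ℂ)
    (a : Fin J → Fin M → Matrix (Fin n) (Fin n) ℂ)
    (hc : ∀ m, (c m).PosSemidef) (ha : ∀ j m, (a j m).PosSemidef)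
    (l : Fin J → ℝ) (hl : ∀ j, 0 ≤ l j)
    (P : Fin M → Matrix (Fin n) (Fin n) ℂ) (hP : IsPOVM P)
    (hS : (∑ m, zOp c a l m * P m * zOp c a l m).PosSemidef)
    (Y₀ : Matrix (Fin n) (Fin n) ℂ) (hY₀ : Y₀ = hS.sqrt)
    (t : Fin M → ℝ)
    -- t_m is the largest real with Y₀ ≥ t_m z_m(λ)
    (ht : ∀ m, IsGreatest {s : ℝ | (Y₀ - (s : ℂ) • zOp c a l m).PosSemidef} (t m))
    (Y : Matrix (Fin n) (Fin n) ℂ)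
    (hY : Y = Y₀ + ∑ m, ((max (1 - t m) 0 : ℝ) : ℂ) • zOp c a l m) :
    (∀ m, (Y - zOp c a l m).PosSemidef) ∧
    ∀ b : Fin J → ℝ, ∀ Q, IsPOVM Q → (∀ j, b j ≤ betaFn a j Q) →
      fObj c Q ≤ (Matrix.trace Y).re - ∑ j, l j * b j :=
  stmt_15_general c a hc ha l hl Y₀ t ht Y hY
end

section
/- If X• is an optimal dual solution (X• ≥ z_m(λ) for all m with Tr X• = g°(λ)) and Π• is an optimal POVM for the modified problem (g(Π•; λ) = g°(λ)), then (X• − z_m(λ)) Π•_m = 0 for every m. -/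
/-!
Complementary slackness. Since the `P m` sum to the identity, strong duality says
`∑ m, tr ((X - z m) * P m) = 0`. Writing positive semidefinite matrices as `A = aᴴ a` and
`B = bᴴ b`, the trace `tr (A * B)` is the squared Frobenius norm of `a * bᴴ`; so every summand is
nonnegative, hence zero, and then `a * bᴴ = 0` forces `A * B = 0`.
-/

open ComplexOrder

namespace Matrix

lemma trace_star_mul_self_mul_star_mul_self {n R : Type*} [Fintype n] [CommSemiring R]
    [StarRing R] (a b : Matrix n n R) :
    (star a * a * (star b * b)).trace = (a * bᴴ * (a * bᴴ)ᴴ).trace := by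
  rw [mul_assoc, trace_mul_comm]
  simp [star_eq_conjTranspose, mul_assoc, conjTranspose_mul]

namespace PosSemidef

open scoped MatrixOrder

variable {n 𝕜 : Type*} [Fintype n] [RCLike 𝕜] {A B : Matrix n n 𝕜}

lemma trace_mul_nonneg_s16 (hA : A.PosSemidef) (hB : B.PosSemidef) : 0 ≤ (A * B).trace := by
  classical
  obtain ⟨a, rfl⟩ := CStarAlgebra.nonneg_iff_eq_star_mul_self.mp hA.nonneg
  obtain ⟨b, rfl⟩ := CStarAlgebra.nonneg_iff_eq_star_mul_self.mp hB.nonneg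
  rw [trace_star_mul_self_mul_star_mul_self]
  exact (posSemidef_self_mul_conjTranspose _).trace_nonneg

lemma mul_eq_zero_of_trace_mul_eq_zero (hA : A.PosSemidef) (hB : B.PosSemidef)
    (h : (A * B).trace = 0) : A * B = 0 := by
  classical
  obtain ⟨a, rfl⟩ := CStarAlgebra.nonneg_iff_eq_star_mul_self.mp hA.nonneg
  obtain ⟨b, rfl⟩ := CStarAlgebra.nonneg_iff_eq_star_mul_self.mp hB.nonneg
  rw [trace_star_mul_self_mul_star_mul_self, trace_mul_conjTranspose_self_eq_zero_iff] at h
  simp only [star_eq_conjTranspose, mul_assoc, ← mul_assoc a, h, zero_mul, mul_zero]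

end PosSemidef

end Matrix

lemma IsPOVM.sum_trace_mul {n M : ℕ} {P : Fin M → Matrix (Fin n) (Fin n) ℂ} (hP : IsPOVM P)
    (X : Matrix (Fin n) (Fin n) ℂ) : ∑ m, (X * P m).trace = X.trace := by
  rw [← Matrix.trace_sum, ← Finset.mul_sum, hP.2, mul_one]

theorem stmt_16_general {n M : ℕ} (z : Fin M → Matrix (Fin n) (Fin n) ℂ)
    (X : Matrix (Fin n) (Fin n) ℂ)
    (hXz : ∀ m, (X - z m).PosSemidef)
    (P : Fin M → Matrix (Fin n) (Fin n) ℂ) (hP : IsPOVM P)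
    -- strong duality: the dual optimal value equals the primal one
    (hstrong : Matrix.trace X = ∑ m, Matrix.trace (z m * P m)) :
    ∀ m, (X - z m) * P m = 0 := by
  have hsum : ∑ m, ((X - z m) * P m).trace = 0 := by
    simp only [Matrix.sub_mul, Matrix.trace_sub, Finset.sum_sub_distrib, hP.sum_trace_mul,
      hstrong, sub_self]
  have hslack := (Finset.sum_eq_zero_iff_of_nonneg fun m _ =>
    (hXz m).trace_mul_nonneg_s16 (hP.1 m)).mp hsum
  exact fun m => (hXz m).mul_eq_zero_of_trace_mul_eq_zero (hP.1 m) (hslack m (Finset.mem_univ m))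

theorem stmt_16 {n M : ℕ} (z : Fin M → Matrix (Fin n) (Fin n) ℂ)
    (hz : ∀ m, (z m).PosSemidef)
    (X : Matrix (Fin n) (Fin n) ℂ) (hXpsd : X.PosSemidef)
    (hXz : ∀ m, (X - z m).PosSemidef)
    (P : Fin M → Matrix (Fin n) (Fin n) ℂ) (hP : IsPOVM P)
    (hPopt : ∀ Q, IsPOVM Q →
      ∑ m, (Matrix.trace (z m * Q m)).re ≤ ∑ m, (Matrix.trace (z m * P m)).re)
    -- strong duality: the dual optimal value equals the primal one
    (hstrong : Matrix.trace X = ∑ m, Matrix.trace (z m * P m)) :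
    ∀ m, (X - z m) * P m = 0 :=
  stmt_16_general z X hXz P hP hstrong
end
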